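/- An increasingly enumerable additive submonoid of the nonnegative rationals is a scalar multiple of a numerical semigroup if and only if it is finitely generated: if Ω ⊆ ℚ is an ω-monoid with at least one nonzero element, then there exist λ > 0 and a numerical semigroup S with Ω = {λ·s : s ∈ S} if and only if the minimal generating set G(Ω) = Ω* \ (Ω* + Ω*) is finite. -/

import Mathlib

/-!
Multiplication by `λ > 0` is an injective additive map `ℕ → ℝ`, so it carries minimal generators
to minimal generators, and a numerical semigroup containing every `n > N` has no minimal generator
above `2N + 1`. Conversely, since `Ω` is well ordered and nonnegative, it is generated by `G(Ω)`.
When `G(Ω)` is finite its elements have a common denominator `d`, so `Ω` is the image under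
`n ↦ n / d` of a nonzero submonoid `M` of `ℕ`; and `M` is `gcd M` times a numerical semigroup,
because a submonoid of `ℕ` contains every large enough multiple of its gcd.
-/

open Pointwise

def minimalGenerators {M : Type*} [AddMonoid M] (Ω : Set M) : Set M :=
  (Ω \ {0}) \ ((Ω \ {0}) + (Ω \ {0}))

def IsNumericalSemigroup (S : Set ℕ) : Prop :=
  0 ∈ S ∧ (∀ x ∈ S, ∀ y ∈ S, x + y ∈ S) ∧ Sᶜ.Finite

def natMulLeft (l : ℝ) : ℕ →+ ℝ :=
  (AddMonoidHom.mulLeft l).comp (Nat.castAddMonoidHom ℝ)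

@[simp]
lemma natMulLeft_apply (l : ℝ) (n : ℕ) : natMulLeft l n = l * n := rfl

lemma natMulLeft_injective {l : ℝ} (hl : l ≠ 0) : Function.Injective (natMulLeft l) := by
  intro m n h
  simpa [hl] using h

lemma minimalGenerators_image {M N : Type*} [AddMonoid M] [AddMonoid N] (f : M →+ N)
    (hf : Function.Injective f) (Ω : Set M) :
    minimalGenerators (f '' Ω) = f '' minimalGenerators Ω := by
  simp only [minimalGenerators, Set.image_sdiff hf, Set.image_add, Set.image_singleton, map_zero]

lemma subset_closure_minimalGenerators {M : Type*} [AddCommMonoid M] [PartialOrder M]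
    [IsOrderedCancelAddMonoid M] {Ω : Set M} (hwf : Ω.IsWF) (hnonneg : ∀ x ∈ Ω, 0 ≤ x) :
    Ω ⊆ AddSubmonoid.closure (minimalGenerators Ω) := by
  intro x hx
  refine hwf.induction hx fun x hx ih => ?_
  by_cases hx0 : x = 0
  · exact hx0 ▸ zero_mem _
  by_cases hxG : x ∈ minimalGenerators Ω
  · exact AddSubmonoid.subset_closure hxG
  obtain ⟨y, ⟨hy, hy0⟩, z, ⟨hz, hz0⟩, rfl⟩ : x ∈ (Ω \ {0}) + (Ω \ {0}) := by
    by_contra h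
    exact hxG ⟨⟨hx, hx0⟩, h⟩
  have hy_pos : 0 < y := (hnonneg y hy).lt_of_ne' hy0
  have hz_pos : 0 < z := (hnonneg z hz).lt_of_ne' hz0
  exact add_mem (ih y hy (lt_add_of_pos_right y hz_pos)) (ih z hz (lt_add_of_pos_left z hy_pos))

lemma IsNumericalSemigroup.finite_minimalGenerators {S : Set ℕ} (hS : IsNumericalSemigroup S) :
    (minimalGenerators S).Finite := by
  obtain ⟨N, hN⟩ := hS.2.2.bddAbove
  have hmem : ∀ n, N < n → n ∈ S := fun n hn => by
    by_contra h
    exact hn.not_ge (hN h)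
  refine (Set.finite_Iic (2 * N + 1)).subset fun n hn => Set.mem_Iic.2 ?_
  by_contra! hlarge
  refine hn.2 ⟨N + 1, ⟨hmem _ (by omega), N.succ_ne_zero⟩, n - (N + 1),
    ⟨hmem _ (by omega), by simp only [Set.mem_singleton_iff]; omega⟩, Nat.add_sub_of_le (by omega)⟩

lemma AddSubmonoid.exists_isNumericalSemigroup_eq_image_mul (M : AddSubmonoid ℕ) (hM : M ≠ ⊥) :
    ∃ g, 0 < g ∧ ∃ S : Set ℕ, IsNumericalSemigroup S ∧ (M : Set ℕ) = (g * ·) '' S := by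
  set g := Nat.setGcd M
  have hg : g ≠ 0 := by
    rw [Ne, Nat.setGcd_eq_zero_iff]
    contrapose! hM
    exact (AddSubmonoid.eq_bot_iff_forall M).2 hM
  obtain ⟨n, hn⟩ := Nat.exists_mem_closure_of_ge (M : Set ℕ)
  rw [AddSubmonoid.closure_eq] at hn
  refine ⟨g, Nat.pos_of_ne_zero hg, {m | g * m ∈ M}, ⟨?_, ?_, ?_⟩, ?_⟩
  · simp
  · intro x hx y hy
    simpa [mul_add] using add_mem hx hy
  · refine (Set.finite_Iio n).subset fun m hm => Set.mem_Iio.2 ?_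
    by_contra! h
    exact hm (hn _ (h.trans (Nat.le_mul_of_pos_left m (Nat.pos_of_ne_zero hg))) (dvd_mul_right g m))
  · ext x
    constructor
    · intro hx
      obtain ⟨k, rfl⟩ := Nat.setGcd_dvd_of_mem hx
      exact ⟨k, hx, rfl⟩
    · rintro ⟨k, hk, rfl⟩
      exact hk

lemma exists_subset_mrange_natMulLeft_inv {G : Set ℝ} (hG : G.Finite)
    (hrat : ∀ x ∈ G, ∃ q : ℚ, x = q) (hnonneg : ∀ x ∈ G, 0 ≤ x) :
    ∃ d : ℕ, 0 < d ∧ G ⊆ AddMonoidHom.mrange (natMulLeft (d : ℝ)⁻¹) := by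
  set s := (hG.preimage Rat.cast_injective.injOn).toFinset
  have hd : 0 < ∏ q ∈ s, q.den := Finset.prod_pos fun q _ => q.pos
  refine ⟨_, hd, fun x hx => ?_⟩
  obtain ⟨q, rfl⟩ := hrat x hx
  obtain ⟨k, hk⟩ : q.den ∣ ∏ q ∈ s, q.den := Finset.dvd_prod_of_mem _ (by simpa [s] using hx)
  have hk0 : (k : ℝ) ≠ 0 := Nat.cast_ne_zero.2 (by rintro rfl; simp [hk] at hd)
  have hnum : ((q.num.toNat : ℕ) : ℝ) = q.num :=
    by exact_mod_cast Int.toNat_of_nonneg (Rat.num_nonneg.2 (by exact_mod_cast hnonneg _ hx))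
  refine ⟨q.num.toNat * k, ?_⟩
  rw [natMulLeft_apply, hk, Rat.cast_def, Nat.cast_mul, Nat.cast_mul, hnum]
  field_simp

lemma AddSubmonoid.exists_isNumericalSemigroup_of_finite_minimalGenerators (Ω : AddSubmonoid ℝ)
    (hrat : ∀ x ∈ Ω, ∃ q : ℚ, x = q) (hwf : (Ω : Set ℝ).IsWF) (hnonneg : ∀ x ∈ Ω, 0 ≤ x)
    (hne : Ω ≠ ⊥) (hfin : (minimalGenerators (Ω : Set ℝ)).Finite) :
    ∃ l : ℝ, 0 < l ∧ ∃ S : Set ℕ, IsNumericalSemigroup S ∧ (Ω : Set ℝ) = natMulLeft l '' S := by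
  obtain ⟨d, hd, hGd⟩ := exists_subset_mrange_natMulLeft_inv hfin
    (fun x hx => hrat x hx.1.1) (fun x hx => hnonneg x hx.1.1)
  set f := natMulLeft (d : ℝ)⁻¹
  have hΩ : (Ω.comap f).map f = Ω := AddSubmonoid.map_comap_eq_self
    ((subset_closure_minimalGenerators hwf hnonneg).trans (AddSubmonoid.closure_le.2 hGd))
  obtain ⟨g, hg, S, hS, hMS⟩ := (Ω.comap f).exists_isNumericalSemigroup_eq_image_mul
    (by rintro hbot; rw [hbot, AddSubmonoid.map_bot] at hΩ; exact hne hΩ.symm)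
  refine ⟨g / d, by positivity, S, hS, ?_⟩
  rw [← hΩ, AddSubmonoid.coe_map, hMS, Set.image_image]
  congr! 1 with n
  simp only [f, natMulLeft_apply]
  push_cast
  ring

/-- An increasingly enumerable additive submonoid of the nonnegative rationals is a
positive scalar multiple of a numerical semigroup iff its minimal generating set is
finite. -/
theorem rational_omega_monoid_scaled_numerical_semigroup_iff_finitely_generated
    (Ω : Set ℝ) (a : ℕ → ℝ)
    (hrat : ∀ x ∈ Ω, ∃ q : ℚ, x = (q : ℝ))
    (hadd : ∀ x ∈ Ω, ∀ y ∈ Ω, x + y ∈ Ω)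
    (hmono : StrictMono a) (h0 : a 0 = 0) (hrange : Set.range a = Ω)
    (hne : ∃ x ∈ Ω, x ≠ 0) :
    (∃ l : ℝ, 0 < l ∧ ∃ S : Set ℕ,
        (0 ∈ S ∧ (∀ x ∈ S, ∀ y ∈ S, x + y ∈ S) ∧ Sᶜ.Finite) ∧
        Ω = (fun s : ℕ => l * (s : ℝ)) '' S) ↔
      ((Ω \ {0}) \ ((Ω \ {0}) + (Ω \ {0}))).Finite := by
  constructor
  · rintro ⟨l, hl, S, hS, rfl⟩
    change (minimalGenerators (natMulLeft l '' S)).Finite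
    rw [minimalGenerators_image _ (natMulLeft_injective hl.ne')]
    exact (IsNumericalSemigroup.finite_minimalGenerators hS).image _
  · intro hfin
    subst hrange
    have hwf : (Set.range a).IsWF := by
      simpa using ((Set.isPWO_of_wellQuasiOrderedLE Set.univ).image_of_monotone hmono.monotone).isWF
    let Ωₘ : AddSubmonoid ℝ :=
      { carrier := Set.range a, add_mem' := fun hx hy => hadd _ hx _ hy, zero_mem' := ⟨0, h0⟩ }
    refine Ωₘ.exists_isNumericalSemigroup_of_finite_minimalGenerators hrat hwf ?_ ?_ hfin
    · rintro _ ⟨n, rfl⟩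
      exact h0 ▸ hmono.monotone n.zero_le
    · obtain ⟨x, hx, hx0⟩ := hne
      exact fun hbot => hx0 ((AddSubmonoid.eq_bot_iff_forall _).1 hbot x hx)
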